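/- arXiv:2308.03112 — 2 statements merged into one kernel-verified Lean document; each statement's English description precedes it below -/
import Mathlib

section
/- Let α > 0, ζ > −1, and v, δ ∈ ℝ. Set α₁ = −δ, α₂ = δ, and define ψ₁, ψ₂ : ℝ × ℝ → ℂ by ψ₁(x,t) = √(2α/(1+ζ))·sech(√(2α)(x − vt))·exp(i[(v − δ)x − ((v² − δ²)/2 − α)t]) and ψ₂(x,t) = √(2α/(1+ζ))·sech(√(2α)(x − vt))·exp(i[(v + δ)x − ((v² − δ²)/2 − α)t]). Then for every x ∈ ℝ and t ∈ ℝ and for j = 1, 2, the pair (ψ₁, ψ₂) satisfies the coupled nonlinear Schrödinger system i·∂ψⱼ/∂t + (1/2)·∂²ψⱼ/∂x² − i·αⱼ·∂ψⱼ/∂x + fⱼ(|ψ₁|², |ψ₂|²)·ψⱼ = 0, where f₁(a,b) = a + ζb and f₂(a,b) = ζa + b. -/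
/-! Both components are traveling waves `g (x - v t) e^{i (b x - ω t)}` with the real profile
`g = A sech (k ξ)`, `k = √(2α)`. For such a wave the residual of the equation is
`(g''/2 + (ω - b²/2 + αⱼ b + F) g + i (b - v - αⱼ) g') e^{i (b x - ω t)}`, whose imaginary part
vanishes because `b = v + αⱼ`. Since `|ψ₁| = |ψ₂| = |g|`, the cubic coupling is
`F = (1 + ζ) A² sech² = k² sech²`, and `sech'' = k² sech - 2 k² sech³` reduces the real part to
`(ω - b²/2 + αⱼ b + k²/2) g`, which vanishes for `ω = (v² - δ²)/2 - α`. -/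

open Complex

noncomputable def travelingWave (g : ℝ → ℝ) (v b ω x t : ℝ) : ℂ :=
  (g (x - v * t) : ℂ) * Complex.exp (I * ((b * x - ω * t : ℝ) : ℂ))

theorem HasDerivAt.cexp_I_mul_ofReal {φ : ℝ → ℝ} {φ' s : ℝ} (hφ : HasDerivAt φ φ' s) :
    HasDerivAt (fun s => Complex.exp (I * (φ s : ℂ))) (I * φ' * Complex.exp (I * (φ s : ℂ))) s := by
  simpa [mul_comm] using (hφ.ofReal_comp.const_mul I).cexp

section TravelingWave

variable {g g' g'' : ℝ → ℝ} (v b ω : ℝ)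

theorem norm_travelingWave (x t : ℝ) :
    ‖travelingWave g v b ω x t‖ = |g (x - v * t)| := by
  rw [travelingWave, norm_mul, Complex.norm_real, Real.norm_eq_abs, norm_exp_I_mul_ofReal, mul_one]

theorem hasDerivAt_travelingWave_space (hg : ∀ ξ, HasDerivAt g (g' ξ) ξ) (x t : ℝ) :
    HasDerivAt (fun y => travelingWave g v b ω y t)
      (travelingWave g' v b ω x t + I * b * travelingWave g v b ω x t) x := by
  have hshift : HasDerivAt (fun y => g (y - v * t)) (g' (x - v * t)) x := by
    simpa using (hg (x - v * t)).comp_sub_const x (v * t)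
  have hphase : HasDerivAt (fun y : ℝ => b * y - ω * t) b x := by
    simpa using ((hasDerivAt_id x).const_mul b).sub_const (ω * t)
  refine (hshift.ofReal_comp.mul hphase.cexp_I_mul_ofReal).congr_deriv ?_
  simp only [travelingWave]
  ring

theorem hasDerivAt_travelingWave_time (hg : ∀ ξ, HasDerivAt g (g' ξ) ξ) (x t : ℝ) :
    HasDerivAt (fun τ => travelingWave g v b ω x τ)
      (-v * travelingWave g' v b ω x t - I * ω * travelingWave g v b ω x t) t := by
  have hshift : HasDerivAt (fun τ => g (x - v * τ)) (-v * g' (x - v * t)) t := by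
    have := (hg (x - v * t)).comp t (((hasDerivAt_id t).const_mul v).const_sub x)
    exact this.congr_deriv (by ring)
  have hphase : HasDerivAt (fun τ : ℝ => b * x - ω * τ) (-ω) t := by
    simpa using ((hasDerivAt_id t).const_mul ω).const_sub (b * x)
  refine (hshift.ofReal_comp.mul hphase.cexp_I_mul_ofReal).congr_deriv ?_
  simp only [travelingWave]
  push_cast
  ring

theorem travelingWave_solves (hg : ∀ ξ, HasDerivAt g (g' ξ) ξ) (hg' : ∀ ξ, HasDerivAt g' (g'' ξ) ξ)
    {a F x t : ℝ} (hb : b = v + a)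
    (hprofile : g'' (x - v * t) / 2 + (ω - b ^ 2 / 2 + a * b + F) * g (x - v * t) = 0) :
    I * deriv (fun τ => travelingWave g v b ω x τ) t
      + 1 / 2 * deriv (deriv (fun y => travelingWave g v b ω y t)) x
      - I * a * deriv (fun y => travelingWave g v b ω y t) x
      + F * travelingWave g v b ω x t = 0 := by
  have hspace := fun y => hasDerivAt_travelingWave_space v b ω hg y t
  have hspace_deriv :
      HasDerivAt (fun y => travelingWave g' v b ω y t + I * b * travelingWave g v b ω y t)
      (travelingWave g'' v b ω x t + I * b * travelingWave g' v b ω x t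
        + I * b * (travelingWave g' v b ω x t + I * b * travelingWave g v b ω x t)) x :=
    (hasDerivAt_travelingWave_space v b ω hg' x t).add ((hspace x).const_mul (I * b))
  rw [(hasDerivAt_travelingWave_time v b ω hg x t).deriv, (hspace x).deriv,
    funext fun y => (hspace y).deriv, hspace_deriv.deriv]
  subst hb
  calc _ = ((g'' (x - v * t) / 2 + (ω - (v + a) ^ 2 / 2 + a * (v + a) + F) * g (x - v * t) : ℝ) : ℂ)
        * Complex.exp (I * (((v + a) * x - ω * t : ℝ) : ℂ)) := by
        simp only [travelingWave]
        push_cast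
        ring_nf
        rw [I_sq]
        ring
    _ = 0 := by rw [hprofile, ofReal_zero, zero_mul]

end TravelingWave

theorem hasDerivAt_sech_profile (A k ξ : ℝ) :
    HasDerivAt (fun ξ => A * (Real.cosh (k * ξ))⁻¹)
      (-(A * k * Real.sinh (k * ξ) / Real.cosh (k * ξ) ^ 2)) ξ := by
  have hcosh := (Real.hasDerivAt_cosh (k * ξ)).comp ξ ((hasDerivAt_id ξ).const_mul k)
  refine ((hcosh.inv (Real.cosh_pos _).ne').const_mul A).congr_deriv ?_
  simp only [Function.comp_apply]
  ring

theorem hasDerivAt_sech_profile_deriv (A k ξ : ℝ) :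
    HasDerivAt (fun ξ => -(A * k * Real.sinh (k * ξ) / Real.cosh (k * ξ) ^ 2))
      (k ^ 2 * (1 - 2 * (Real.cosh (k * ξ))⁻¹ ^ 2) * (A * (Real.cosh (k * ξ))⁻¹)) ξ := by
  have hlin := (hasDerivAt_id ξ).const_mul k
  have hsinh := ((Real.hasDerivAt_sinh (k * ξ)).comp ξ hlin).const_mul (A * k)
  have hcosh := ((Real.hasDerivAt_cosh (k * ξ)).comp ξ hlin).pow 2
  refine (hsinh.div hcosh (pow_ne_zero 2 (Real.cosh_pos _).ne')).neg.congr_deriv ?_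
  have hc := (Real.cosh_pos (k * ξ)).ne'
  simp only [Function.comp_apply, Pi.pow_apply]
  field_simp
  linear_combination (-2 * A * k ^ 2 * Real.cosh (k * ξ)) * Real.cosh_sq (k * ξ)

theorem travelingWave_sech_solves {A k v a b ω : ℝ} (hb : b = v + a)
    (hω : ω - b ^ 2 / 2 + a * b + k ^ 2 / 2 = 0) (x t : ℝ) :
    I * deriv (fun τ => travelingWave (fun ξ => A * (Real.cosh (k * ξ))⁻¹) v b ω x τ) t
      + 1 / 2 * deriv (deriv fun y => travelingWave (fun ξ => A * (Real.cosh (k * ξ))⁻¹) v b ω y t) x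
      - I * a * deriv (fun y => travelingWave (fun ξ => A * (Real.cosh (k * ξ))⁻¹) v b ω y t) x
      + ((k ^ 2 * (Real.cosh (k * (x - v * t)))⁻¹ ^ 2 : ℝ) : ℂ)
        * travelingWave (fun ξ => A * (Real.cosh (k * ξ))⁻¹) v b ω x t = 0 :=
  travelingWave_solves v b ω (hasDerivAt_sech_profile A k) (hasDerivAt_sech_profile_deriv A k) hb
    (by linear_combination A * (Real.cosh (k * (x - v * t)))⁻¹ * hω)

/-- The two-component soliton pair
`ψⱼ(x,t) = √(2α/(1+ζ))·sech(√(2α)(x − vt))·exp(i[(v ∓ δ)x − ((v² − δ²)/2 − α)t])`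
satisfies the coupled nonlinear Schrödinger system
`i·∂ψⱼ/∂t + (1/2)·∂²ψⱼ/∂x² − i·αⱼ·∂ψⱼ/∂x + fⱼ(|ψ₁|², |ψ₂|²)·ψⱼ = 0`
with `α₁ = −δ`, `α₂ = δ`, `f₁(a,b) = a + ζb`, `f₂(a,b) = ζa + b`. -/
theorem stmt_2 (α ζ v δ : ℝ) (hα : 0 < α) (hζ : -1 < ζ)
    (α₁ α₂ : ℝ) (hα₁ : α₁ = -δ) (hα₂ : α₂ = δ)
    (f₁ f₂ : ℝ → ℝ → ℝ)
    (hf₁ : ∀ a b : ℝ, f₁ a b = a + ζ * b)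
    (hf₂ : ∀ a b : ℝ, f₂ a b = ζ * a + b)
    (ψ₁ ψ₂ : ℝ × ℝ → ℂ)
    (hψ₁ : ∀ x t : ℝ, ψ₁ (x, t) =
      (Real.sqrt (2 * α / (1 + ζ)) : ℂ)
        * ((Real.cosh (Real.sqrt (2 * α) * (x - v * t)))⁻¹ : ℝ)
        * Complex.exp (Complex.I *
            (((v - δ) * x - ((v ^ 2 - δ ^ 2) / 2 - α) * t : ℝ) : ℂ)))
    (hψ₂ : ∀ x t : ℝ, ψ₂ (x, t) =
      (Real.sqrt (2 * α / (1 + ζ)) : ℂ)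
        * ((Real.cosh (Real.sqrt (2 * α) * (x - v * t)))⁻¹ : ℝ)
        * Complex.exp (Complex.I *
            (((v + δ) * x - ((v ^ 2 - δ ^ 2) / 2 - α) * t : ℝ) : ℂ))) :
    ∀ x t : ℝ,
      (Complex.I * deriv (fun τ : ℝ => ψ₁ (x, τ)) t
          + (1 / 2 : ℂ) * deriv (deriv (fun y : ℝ => ψ₁ (y, t))) x
          - Complex.I * (α₁ : ℂ) * deriv (fun y : ℝ => ψ₁ (y, t)) x
          + (f₁ (‖ψ₁ (x, t)‖ ^ 2) (‖ψ₂ (x, t)‖ ^ 2) : ℂ)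
              * ψ₁ (x, t) = 0)
      ∧ (Complex.I * deriv (fun τ : ℝ => ψ₂ (x, τ)) t
          + (1 / 2 : ℂ) * deriv (deriv (fun y : ℝ => ψ₂ (y, t))) x
          - Complex.I * (α₂ : ℂ) * deriv (fun y : ℝ => ψ₂ (y, t)) x
          + (f₂ (‖ψ₁ (x, t)‖ ^ 2) (‖ψ₂ (x, t)‖ ^ 2) : ℂ)
              * ψ₂ (x, t) = 0) := by
  intro x t
  have hk : Real.sqrt (2 * α) ^ 2 = 2 * α := Real.sq_sqrt (by positivity)
  have hA : Real.sqrt (2 * α / (1 + ζ)) ^ 2 = 2 * α / (1 + ζ) :=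
    Real.sq_sqrt (div_nonneg (by positivity) (by linarith))
  have hwave : ∀ (b : ℝ) (ψ : ℝ × ℝ → ℂ),
      (∀ x t : ℝ, ψ (x, t) = (Real.sqrt (2 * α / (1 + ζ)) : ℂ)
        * ((Real.cosh (Real.sqrt (2 * α) * (x - v * t)))⁻¹ : ℝ)
        * Complex.exp (Complex.I * ((b * x - ((v ^ 2 - δ ^ 2) / 2 - α) * t : ℝ) : ℂ))) →
      ∀ x t : ℝ, ψ (x, t) = travelingWave
        (fun ξ => Real.sqrt (2 * α / (1 + ζ)) * (Real.cosh (Real.sqrt (2 * α) * ξ))⁻¹)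
        v b ((v ^ 2 - δ ^ 2) / 2 - α) x t := by
    intro b ψ hψ x t
    rw [hψ, travelingWave, ofReal_mul]
  simp only [hwave _ ψ₁ hψ₁, hwave _ ψ₂ hψ₂, norm_travelingWave, sq_abs, mul_pow, hA, hf₁, hf₂,
    hα₁, hα₂]
  set N := 2 * α / (1 + ζ) * (Real.cosh (Real.sqrt (2 * α) * (x - v * t)))⁻¹ ^ 2 with hN
  have hcoupling :
      N + ζ * N = Real.sqrt (2 * α) ^ 2 * (Real.cosh (Real.sqrt (2 * α) * (x - v * t)))⁻¹ ^ 2 := by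
    rw [hN, hk]
    field_simp [show 1 + ζ ≠ 0 by linarith]
  rw [hcoupling, add_comm (ζ * N), hcoupling]
  exact ⟨travelingWave_sech_solves (by ring) (by rw [hk]; ring) x t,
    travelingWave_sech_solves (by ring) (by rw [hk]; ring) x t⟩
end

section
/- Let β > 0 and let h : ℝ → ℂ be a Schwartz function. For t > 0 define u(x,t) = (4πβt)^{−1/2}·e^{−iπ/4}·∫_ℝ exp(i(x−s)²/(4βt))·h(s) ds. Then for every x ∈ ℝ, u(x,t) → h(x) as t → 0⁺. -/
/-!
Write the kernel as a Gaussian `exp (-b (x - s)²)` with `b = -i/(4βt)`. For `Re b > 0` the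
multiplication formula `∫ 𝓕⁻ φ · G = ∫ φ · 𝓕⁻ G` and the Fourier transform of a Gaussian
turn the convolution into `(π/b)^{1/2} · 𝓕⁻ (exp (-π² ξ²/b) · 𝓕 h)`; both sides are continuous
in `b` up to the imaginary axis, so the identity persists there. At `b = -i/(4βt)` the prefactor
cancels the normalisation of the propagator, leaving `𝓕⁻ (exp (-4π²βt ξ² i) · 𝓕 h) x`, which
tends to `𝓕⁻ (𝓕 h) x = h x` by dominated convergence.
-/

open MeasureTheory Real Filter Complex FourierTransform
open scoped Topology

theorem tendsto_integral_cexp_mul {ι α : Type*} [MeasurableSpace α] {μ : Measure α}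
    {l : Filter ι} [l.IsCountablyGenerated] {F : ι → α → ℂ} {F₀ g : α → ℂ}
    (hg : Integrable g μ) (hFm : ∀ᶠ i in l, AEStronglyMeasurable (F i) μ)
    (hFre : ∀ᶠ i in l, ∀ a, (F i a).re ≤ 0) (hF : ∀ a, Tendsto (F · a) l (𝓝 (F₀ a))) :
    Tendsto (fun i => ∫ a, cexp (F i a) * g a ∂μ) l (𝓝 (∫ a, cexp (F₀ a) * g a ∂μ)) := by
  refine tendsto_integral_filter_of_dominated_convergence (fun a => ‖g a‖)
    (hFm.mono fun i hi => (Complex.continuous_exp.comp_aestronglyMeasurable hi).mul hg.1)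
    (hFre.mono fun i hi => ae_of_all _ fun a => ?_) hg.norm
    (ae_of_all _ fun a => ((Complex.continuous_exp.tendsto _).comp (hF a)).mul_const _)
  rw [norm_mul, norm_exp]
  exact mul_le_of_le_one_left (norm_nonneg _) (Real.exp_le_one_iff.2 (hi a))

theorem tendsto_fourierInv_cexp_mul {ι : Type*} {l : Filter ι} [l.IsCountablyGenerated]
    {F : ι → ℝ → ℂ} {F₀ g : ℝ → ℂ} (hg : Integrable g) (hFc : ∀ i, Continuous (F i))
    (hFre : ∀ᶠ i in l, ∀ ξ, (F i ξ).re ≤ 0) (hF : ∀ ξ, Tendsto (F · ξ) l (𝓝 (F₀ ξ))) (x : ℝ) :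
    Tendsto (fun i => 𝓕⁻ (fun ξ => cexp (F i ξ) * g ξ) x) l
      (𝓝 (𝓕⁻ (fun ξ => cexp (F₀ ξ) * g ξ) x)) := by
  simp only [Real.fourierInv_eq, Circle.smul_def, smul_eq_mul, mul_left_comm _ (cexp _)]
  exact tendsto_integral_cexp_mul
    (by simpa [mul_comm, Circle.smul_def] using (Real.fourierIntegral_convergent_iff (-x)).2 hg)
    (Eventually.of_forall fun i => (hFc i).aestronglyMeasurable) hFre hF

theorem fourierInv_cexp_neg_mul_sq_sub {b : ℂ} (hb : 0 < b.re) (x ξ : ℝ) :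
    𝓕⁻ (fun s : ℝ => cexp (-b * (x - s) ^ 2)) ξ
      = (π / b) ^ (1 / 2 : ℂ) * cexp (-π ^ 2 / b * ξ ^ 2) * 𝐞 (ξ * x) := by
  have hb0 : b ≠ 0 := fun h => by simp [h] at hb
  have hquad : ∀ s : ℝ, cexp (↑(2 * π * inner ℝ s ξ) * I) • cexp (-b * (x - s) ^ 2)
      = cexp (-b * s ^ 2 + (2 * b * x + 2 * π * ξ * I) * s + -b * x ^ 2) := by
    intro s
    rw [smul_eq_mul, ← Complex.exp_add, Real.inner_apply]
    push_cast
    ring_nf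
  rw [Real.fourierInv_eq', funext hquad, integral_cexp_quadratic (by simpa using hb), neg_neg,
    Real.fourierChar_apply, mul_assoc _ (cexp _), ← Complex.exp_add]
  congr 2
  field_simp
  push_cast
  ring_nf
  simp only [I_sq]
  ring

theorem ofReal_div_mem_slitPlane {r : ℝ} (hr : 0 < r) {b : ℂ} (hb : 0 ≤ b.re) (hb0 : b ≠ 0) :
    (r / b : ℂ) ∈ slitPlane := by
  have hn : 0 < normSq b := normSq_pos.2 hb0
  rw [mem_slitPlane_iff, div_re, div_im]
  simp only [ofReal_re, ofReal_im, zero_mul, zero_div, add_zero, zero_sub]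
  rcases hb.lt_or_eq with hb | hb
  · exact Or.inl (by positivity)
  · have him : b.im ≠ 0 := fun him => hb0 (Complex.ext hb.symm him)
    exact Or.inr (by simp [hr.ne', him, hn.ne'])

theorem cpow_ofReal_mul_I_half {r : ℝ} (hr : 0 < r) :
    ((r : ℂ) * I) ^ (1 / 2 : ℂ) = √r * cexp (I * (π / 4 : ℝ)) := by
  have hz : (r : ℂ) * I ≠ 0 := by simp [hr.ne']
  rw [cpow_def_of_ne_zero hz, log_ofReal_mul hr I_ne_zero, log_I,
    show (Real.log r + π / 2 * I) * (1 / 2 : ℂ) = (Real.log r / 2 : ℝ) + I * (π / 4 : ℝ) by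
      push_cast; ring,
    Complex.exp_add, ← ofReal_exp, ← Real.log_sqrt hr.le, Real.exp_log (Real.sqrt_pos.2 hr)]

section

variable {h : ℝ → ℂ}

theorem integral_cexp_neg_mul_sq_sub_mul_of_re_pos (hc : Continuous h) (hi : Integrable h)
    (hF : Integrable (𝓕 h)) {b : ℂ} (hb : 0 < b.re) (x : ℝ) :
    ∫ s : ℝ, cexp (-b * (x - s) ^ 2) * h s
      = (π / b) ^ (1 / 2 : ℂ) * 𝓕⁻ (fun ξ : ℝ => cexp (-π ^ 2 / b * ξ ^ 2) * 𝓕 h ξ) x := by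
  have hG : Integrable (fun s : ℝ => cexp (-b * (x - s) ^ 2)) := by
    simpa using (integrable_cexp_neg_mul_sq hb).comp_sub_left x
  have hmul := VectorFourier.integral_fourierIntegral_smul_eq_flip (L := -innerₗ ℝ) (μ := volume)
    Real.continuous_fourierChar (by fun_prop) hF hG
  change ∫ s, 𝓕⁻ (𝓕 h) s • _ = _ at hmul
  rw [hc.fourierInv_fourier_eq hi hF] at hmul
  simp only [smul_eq_mul, mul_comm (h _)] at hmul
  rw [hmul, Real.fourierInv_eq, ← integral_const_mul]
  congr 1 with ξ
  have hflip : VectorFourier.fourierIntegral 𝐞 volume (-innerₗ ℝ).flip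
      (fun s : ℝ => cexp (-b * (x - s) ^ 2)) ξ = 𝓕⁻ (fun s : ℝ => cexp (-b * (x - s) ^ 2)) ξ := by
    simp [VectorFourier.fourierIntegral, Real.fourierInv_eq, mul_comm]
  rw [hflip, fourierInv_cexp_neg_mul_sq_sub hb, Real.inner_apply, Circle.smul_def, smul_eq_mul]
  ring

theorem integral_cexp_neg_mul_sq_sub_mul (hc : Continuous h) (hi : Integrable h)
    (hF : Integrable (𝓕 h)) {b : ℂ} (hb : 0 ≤ b.re) (hb0 : b ≠ 0) (x : ℝ) :
    ∫ s : ℝ, cexp (-b * (x - s) ^ 2) * h s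
      = (π / b) ^ (1 / 2 : ℂ) * 𝓕⁻ (fun ξ : ℝ => cexp (-π ^ 2 / b * ξ ^ 2) * 𝓕 h ξ) x := by
  -- For `Re b = 0` the kernel is not integrable, so approach `b` through `b + ε`, `ε ↓ 0`.
  have hbε : Tendsto (fun ε : ℝ => (ε : ℂ) + b) (𝓝[>] 0) (𝓝 b) := by
    simpa using ((continuous_ofReal.tendsto 0).add_const b).mono_left nhdsWithin_le_nhds
  have hre : ∀ ε : ℝ, 0 < ε → 0 < ((ε : ℂ) + b).re := fun ε hε => by
    simpa using add_pos_of_pos_of_nonneg hε hb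
  have hlhs := tendsto_integral_cexp_mul (μ := volume) (l := 𝓝[>] (0 : ℝ))
    (F := fun (ε s : ℝ) => -((ε : ℂ) + b) * (x - s) ^ 2)
    hi (Eventually.of_forall fun ε => by fun_prop)
    (eventually_nhdsWithin_of_forall fun ε hε s => by
      rw [show -((ε : ℂ) + b) * (x - s) ^ 2 = -((ε + b) * ((x - s) ^ 2 : ℝ)) by push_cast; ring,
        neg_re, re_mul_ofReal]
      exact neg_nonpos.2 (mul_nonneg (hre ε hε).le (sq_nonneg _)))
    (fun s => hbε.neg.mul_const _)
  have hrhs := tendsto_fourierInv_cexp_mul (l := 𝓝[>] (0 : ℝ))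
    (F := fun (ε ξ : ℝ) => -π ^ 2 / ((ε : ℂ) + b) * ξ ^ 2)
    hF (fun ε => by fun_prop)
    (eventually_nhdsWithin_of_forall fun ε hε ξ => by
      rw [show -π ^ 2 / ((ε : ℂ) + b) * ξ ^ 2 = -(((ε : ℂ) + b)⁻¹ * ((π * ξ) ^ 2 : ℝ)) by
          push_cast; ring,
        neg_re, re_mul_ofReal, inv_re]
      exact neg_nonpos.2 (mul_nonneg (div_nonneg (hre ε hε).le (normSq_nonneg _)) (sq_nonneg _)))
    (fun ξ => (tendsto_const_nhds.div hbε hb0).mul_const _) x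
  have hcpow : Tendsto (fun ε : ℝ => (π / ((ε : ℂ) + b)) ^ (1 / 2 : ℂ)) (𝓝[>] 0)
      (𝓝 ((π / b) ^ (1 / 2 : ℂ))) :=
    (continuousAt_cpow_const (ofReal_div_mem_slitPlane pi_pos hb hb0)).tendsto.comp
      (tendsto_const_nhds.div hbε hb0)
  refine tendsto_nhds_unique (hlhs.congr' ?_) (hcpow.mul hrhs)
  exact eventually_nhdsWithin_of_forall fun ε hε =>
    integral_cexp_neg_mul_sq_sub_mul_of_re_pos hc hi hF (hre ε hε) x

theorem integral_cexp_I_mul_sq_div_mul (hc : Continuous h) (hi : Integrable h)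
    (hF : Integrable (𝓕 h)) {τ : ℝ} (hτ : 0 < τ) (x : ℝ) :
    ∫ s : ℝ, cexp (I * ((x - s) ^ 2 / τ : ℝ)) * h s
      = √(π * τ) * cexp (I * (π / 4 : ℝ)) *
        𝓕⁻ (fun ξ : ℝ => cexp (-(π ^ 2 * τ * ξ ^ 2 : ℝ) * I) * 𝓕 h ξ) x := by
  have hb0 : -I / τ ≠ 0 := by simp [hτ.ne']
  have hkernel : ∀ s : ℝ, cexp (I * ((x - s) ^ 2 / τ : ℝ)) = cexp (-(-I / τ) * (x - s) ^ 2) := by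
    intro s; push_cast; ring_nf
  have hscale : (π : ℂ) / (-I / τ) = (π * τ : ℝ) * I := by
    field_simp; push_cast; ring_nf; simp [I_sq]
  have hphase : ∀ ξ : ℝ, -π ^ 2 / (-I / τ) * ξ ^ 2 = (-(π ^ 2 * τ * ξ ^ 2 : ℝ) : ℂ) * I := by
    intro ξ; field_simp; push_cast; ring_nf; simp [I_sq]
  simp_rw [hkernel, integral_cexp_neg_mul_sq_sub_mul hc hi hF (by simp) hb0 x, hscale,
    cpow_ofReal_mul_I_half (by positivity : 0 < π * τ), hphase]

theorem tendsto_fourierInv_cexp_mul_sq_mul_fourier (hc : Continuous h) (hi : Integrable h)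
    (hF : Integrable (𝓕 h)) (x : ℝ) :
    Tendsto (fun τ : ℝ => 𝓕⁻ (fun ξ : ℝ => cexp (-(π ^ 2 * τ * ξ ^ 2 : ℝ) * I) * 𝓕 h ξ) x)
      (𝓝 0) (𝓝 (h x)) := by
  have := tendsto_fourierInv_cexp_mul (l := 𝓝 (0 : ℝ))
    (F := fun (τ ξ : ℝ) => -(π ^ 2 * τ * ξ ^ 2 : ℝ) * I) (F₀ := 0) hF (fun τ => by fun_prop)
    (Eventually.of_forall fun τ ξ => by
      simp only [neg_mul, neg_re, re_ofReal_mul, I_re, mul_zero, neg_zero, le_refl])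
    (fun ξ => by simpa using ((by fun_prop : Continuous fun τ : ℝ =>
      -(π ^ 2 * τ * ξ ^ 2 : ℝ) * I).tendsto 0)) x
  simpa [hc.fourierInv_fourier_eq hi hF] using this

end

/-- For `β > 0` and Schwartz `h`, the free Schrödinger propagator
`u(x,t) = (4πβt)^{−1/2}·e^{−iπ/4}·∫ exp(i(x−s)²/(4βt))·h(s) ds` recovers the
initial data: `u(x,t) → h(x)` as `t → 0⁺`, for every `x ∈ ℝ`. -/
theorem stmt_8 (β : ℝ) (hβ : 0 < β) (h : SchwartzMap ℝ ℂ) (u : ℝ → ℝ → ℂ)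
    (hu : ∀ x t : ℝ, u x t =
      ((Real.sqrt (4 * π * β * t))⁻¹ : ℝ) * Complex.exp (-Complex.I * (π / 4 : ℝ))
        * ∫ s : ℝ, Complex.exp (Complex.I * (((x - s) ^ 2 / (4 * β * t) : ℝ) : ℂ)) * h s) :
    ∀ x : ℝ, Tendsto (fun t : ℝ => u x t) (nhdsWithin 0 (Set.Ioi 0)) (nhds (h x)) := by
  intro x
  have hF : Integrable (𝓕 ⇑h) := (𝓕 h).integrable
  have hrep : ∀ t > 0, u x t
      = 𝓕⁻ (fun ξ : ℝ => cexp (-(π ^ 2 * (4 * β * t) * ξ ^ 2 : ℝ) * I) * 𝓕 h ξ) x := by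
    intro t ht
    have hsqrt : (√(π * (4 * β * t)) : ℂ) ≠ 0 := ofReal_ne_zero.2 (by positivity)
    rw [hu, integral_cexp_I_mul_sq_div_mul h.continuous h.integrable hF (by positivity),
      show 4 * π * β * t = π * (4 * β * t) by ring, ← mul_assoc, ofReal_inv, mul_mul_mul_comm,
      inv_mul_cancel₀ hsqrt, ← Complex.exp_add, neg_mul, neg_add_cancel, Complex.exp_zero,
      one_mul, one_mul]
    rfl
  have hτ : Tendsto (fun t : ℝ => 4 * β * t) (𝓝[>] 0) (𝓝 0) :=
    ((continuous_const_mul (4 * β)).tendsto' 0 0 (mul_zero _)).mono_left nhdsWithin_le_nhds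
  exact ((tendsto_fourierInv_cexp_mul_sq_mul_fourier h.continuous h.integrable hF x).comp hτ).congr'
    (eventually_nhdsWithin_of_forall fun t ht => (hrep t ht).symm)
end
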